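/- For a finite group G, if G has a unique normal subgroup N with G/N isomorphic to C2 × C2, then G can be written in exactly one way as the union of three irredundant proper subgroups. -/

import Mathlib

/-- `S` is a covering of `G` by three irredundant proper subgroups. -/
def IsIrredundantTripleCover {G : Type*} [Group G] (S : Set (Subgroup G)) : Prop :=
  ∃ H1 H2 H3 : Subgroup G, S = {H1, H2, H3} ∧
    H1 ≠ ⊤ ∧ H2 ≠ ⊤ ∧ H3 ≠ ⊤ ∧
    ¬ (H1 : Set G) ⊆ (H2 : Set G) ∪ (H3 : Set G) ∧
    ¬ (H2 : Set G) ⊆ (H1 : Set G) ∪ (H3 : Set G) ∧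
    ¬ (H3 : Set G) ⊆ (H1 : Set G) ∪ (H2 : Set G) ∧
    (H1 : Set G) ∪ (H2 : Set G) ∪ (H3 : Set G) = Set.univ

/-! Each member of an irredundant cover `G = A ∪ B ∪ C` has index 2, and `A ∩ B = B ∩ C = C ∩ A`
is the kernel of `g ↦ (χ_A g, χ_B g) : G → C₂ × C₂`, where `χ_H` is the character with kernel
`H`. The subgroups strictly between this kernel and `G` are exactly `A`, `B`, `C`, so the cover
is determined by a normal subgroup with Klein four quotient; conversely, pulling back the three
order-2 subgroups of `C₂ × C₂` along a surjection gives such a cover. -/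

local notation "V₄" => Multiplicative (ZMod 2) × Multiplicative (ZMod 2)

namespace Subgroup

variable {G : Type*} [Group G] {H K X : Subgroup G}

theorem isCoatom_of_index_eq_two (hH : H.index = 2) : IsCoatom H := by
  refine ⟨fun h => by simp [h] at hH, fun L hL => (eq_top_iff' L).2 fun g => ?_⟩
  obtain ⟨y, hyL, hyH⟩ := SetLike.exists_of_lt hL
  by_cases hg : g ∈ H
  · exact hL.le hg
  · have : y⁻¹ * g ∈ H := by simp [mul_mem_iff_of_index_two hH, hyH, hg]
    simpa using mul_mem hyL (hL.le this)

theorem le_of_inf_le_of_index_eq_two (hK : K.index = 2) (hX : H ⊓ K ≤ X) {x : G}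
    (hxH : x ∈ H) (hxK : x ∉ K) (hxX : x ∈ X) : H ≤ X := by
  intro g hg
  by_cases hgK : g ∈ K
  · exact hX (mem_inf.2 ⟨hg, hgK⟩)
  · have : x⁻¹ * g ∈ H ⊓ K :=
      mem_inf.2 ⟨mul_mem (inv_mem hxH) hg, by simp [mul_mem_iff_of_index_two hK, hxK, hgK]⟩
    simpa using mul_mem hxX (hX this)

open Classical in
noncomputable def indexTwoChar (H : Subgroup G) (hH : H.index = 2) :
    G →* Multiplicative (ZMod 2) where
  toFun g := if g ∈ H then 1 else Multiplicative.ofAdd 1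
  map_one' := if_pos H.one_mem
  map_mul' g h := by
    by_cases hg : g ∈ H <;> by_cases hh : h ∈ H <;>
      simp [mul_mem_iff_of_index_two hH, hg, hh, ← ofAdd_add, CharTwo.add_self_eq_zero]

theorem indexTwoChar_apply [DecidablePred (· ∈ H)] (hH : H.index = 2) (g : G) :
    indexTwoChar H hH g = if g ∈ H then 1 else Multiplicative.ofAdd 1 := by
  simp only [indexTwoChar, MonoidHom.coe_mk, OneHom.coe_mk]
  congr

theorem ker_indexTwoChar (hH : H.index = 2) : (indexTwoChar H hH).ker = H := by
  classical
  ext g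
  by_cases hg : g ∈ H <;> simp [MonoidHom.mem_ker, indexTwoChar_apply, hg]

end Subgroup

open Subgroup

structure IsIrredundantCover {G : Type*} [Group G] (A B C : Subgroup G) : Prop where
  mem_or_mem_or_mem : ∀ g, g ∈ A ∨ g ∈ B ∨ g ∈ C
  exists_mem_left : ∃ a ∈ A, a ∉ B ∧ a ∉ C
  exists_mem_mid : ∃ b ∈ B, b ∉ A ∧ b ∉ C
  exists_mem_right : ∃ c ∈ C, c ∉ A ∧ c ∉ B

namespace IsIrredundantCover

variable {G : Type*} [Group G] {A B C X : Subgroup G}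

theorem rotate (h : IsIrredundantCover A B C) : IsIrredundantCover B C A where
  mem_or_mem_or_mem g := by have := h.mem_or_mem_or_mem g; tauto
  exists_mem_left := h.exists_mem_mid.imp fun _ ⟨hb, hbA, hbC⟩ => ⟨hb, hbC, hbA⟩
  exists_mem_mid := h.exists_mem_right.imp fun _ ⟨hc, hcA, hcB⟩ => ⟨hc, hcB, hcA⟩
  exists_mem_right := h.exists_mem_left

theorem swap (h : IsIrredundantCover A B C) : IsIrredundantCover A C B where
  mem_or_mem_or_mem g := by have := h.mem_or_mem_or_mem g; tauto
  exists_mem_left := h.exists_mem_left.imp fun _ ⟨ha, haB, haC⟩ => ⟨ha, haC, haB⟩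
  exists_mem_mid := h.exists_mem_right
  exists_mem_right := h.exists_mem_mid

theorem not_le (h : IsIrredundantCover A B C) : ¬A ≤ B := by
  obtain ⟨a, ha, haB, -⟩ := h.exists_mem_left
  exact fun hAB => haB (hAB ha)

theorem inf_le (h : IsIrredundantCover A B C) : A ⊓ B ≤ C := by
  obtain ⟨c, hc, hcA, hcB⟩ := h.exists_mem_right
  intro x hx
  obtain ⟨hxA, hxB⟩ := mem_inf.1 hx
  rcases h.mem_or_mem_or_mem (x * c) with hxc | hxc | hxc
  · exact absurd (by simpa using mul_mem (inv_mem hxA) hxc) hcA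
  · exact absurd (by simpa using mul_mem (inv_mem hxB) hxc) hcB
  · simpa using mul_mem hxc (inv_mem hc)

theorem inf_rotate (h : IsIrredundantCover A B C) : B ⊓ C = A ⊓ B :=
  le_antisymm (le_inf h.rotate.inf_le inf_le_left) (le_inf inf_le_right h.inf_le)

theorem mul_mem_left (h : IsIrredundantCover A B C) {x y : G}
    (hxB : x ∈ B) (hxC : x ∉ C) (hyC : y ∈ C) (hyB : y ∉ B) : x * y ∈ A := by
  rcases h.mem_or_mem_or_mem (x * y) with hxy | hxy | hxy
  · exact hxy
  · exact absurd (by simpa using mul_mem (inv_mem hxB) hxy) hyB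
  · exact absurd (by simpa using mul_mem hxy (inv_mem hyC)) hxC

theorem index_eq_two (h : IsIrredundantCover A B C) : A.index = 2 := by
  obtain ⟨b, hb, -, hbC⟩ := h.exists_mem_mid
  obtain ⟨c, hc, hcA, hcB⟩ := h.exists_mem_right
  refine index_eq_two_iff_exists_notMem_and'.2
    ⟨c, hcA, fun g => or_iff_not_imp_right.2 fun hgA => ?_⟩
  rcases h.mem_or_mem_or_mem g with hgA' | hgB | hgC
  · exact absurd hgA' hgA
  · exact h.swap.mul_mem_left hc hcB hgB fun hgC => hgA (h.rotate.inf_le ⟨hgB, hgC⟩)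
  · have hgB : g ∉ B := fun hgB => hgA (h.rotate.inf_le ⟨hgB, hgC⟩)
    -- `c * g = (c * b⁻¹) * (b * g)`, each factor a product of elements of `C \ B` and `B \ C`.
    have hcb : c * b⁻¹ ∈ A :=
      h.swap.mul_mem_left hc hcB (inv_mem hb) (by simpa using hbC)
    simpa [mul_assoc] using mul_mem hcb (h.mul_mem_left hb hbC hgC hgB)

theorem left_mem_Ioo (h : IsIrredundantCover A B C) : A ∈ Set.Ioo (A ⊓ B) ⊤ :=
  ⟨inf_lt_left.2 h.not_le, lt_top_iff_ne_top.2 (isCoatom_of_index_eq_two h.index_eq_two).1⟩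

theorem eq_left_of_mem_Ioo (h : IsIrredundantCover A B C) (hX : X ∈ Set.Ioo (A ⊓ B) ⊤)
    {x : G} (hxX : x ∈ X) (hxA : x ∈ A) (hxN : x ∉ A ⊓ B) : X = A := by
  have hxB : x ∉ B := fun hxB => hxN ⟨hxA, hxB⟩
  have hAX := le_of_inf_le_of_index_eq_two h.rotate.index_eq_two hX.1.le hxA hxB hxX
  exact ((isCoatom_of_index_eq_two h.index_eq_two).le_iff.1 hAX).resolve_left hX.2.ne

theorem Ioo_inf_eq (h : IsIrredundantCover A B C) : Set.Ioo (A ⊓ B) ⊤ = {A, B, C} := by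
  have hBC := h.inf_rotate
  have hCA := h.rotate.inf_rotate
  ext X
  constructor
  · intro hX
    obtain ⟨x, hxX, hxN⟩ := SetLike.exists_of_lt hX.1
    rcases h.mem_or_mem_or_mem x with hxA | hxB | hxC
    · exact Or.inl (h.eq_left_of_mem_Ioo hX hxX hxA hxN)
    · rw [← hBC] at hX hxN
      exact Or.inr (Or.inl (h.rotate.eq_left_of_mem_Ioo hX hxX hxB hxN))
    · rw [← hBC, ← hCA] at hX hxN
      exact Or.inr (Or.inr (h.rotate.rotate.eq_left_of_mem_Ioo hX hxX hxC hxN))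
  · rintro (rfl | rfl | rfl)
    · exact h.left_mem_Ioo
    · simpa [hBC] using h.rotate.left_mem_Ioo
    · simpa [hCA, hBC] using h.rotate.rotate.left_mem_Ioo

theorem exists_surjective_ker_eq (h : IsIrredundantCover A B C) :
    ∃ φ : G →* V₄, Function.Surjective φ ∧ φ.ker = A ⊓ B := by
  classical
  have hA := h.index_eq_two
  have hB := h.rotate.index_eq_two
  refine ⟨(indexTwoChar A hA).prod (indexTwoChar B hB), ?_, by
    rw [MonoidHom.ker_prod, ker_indexTwoChar, ker_indexTwoChar]⟩
  obtain ⟨a, ha, haB, -⟩ := h.exists_mem_left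
  obtain ⟨b, hb, hbA, -⟩ := h.exists_mem_mid
  obtain ⟨c, -, hcA, hcB⟩ := h.exists_mem_right
  have hV : ∀ q : V₄, q = (1, 1) ∨ q = (1, .ofAdd 1) ∨ q = (.ofAdd 1, 1) ∨
      q = (.ofAdd 1, .ofAdd 1) := by decide
  intro q
  rcases hV q with rfl | rfl | rfl | rfl
  · exact ⟨1, map_one _⟩
  · exact ⟨a, by simp [indexTwoChar_apply, ha, haB]⟩
  · exact ⟨b, by simp [indexTwoChar_apply, hb, hbA]⟩
  · exact ⟨c, by simp [indexTwoChar_apply, hcA, hcB]⟩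

theorem comap {H : Type*} [Group H] {A B C : Subgroup H} (h : IsIrredundantCover A B C)
    {φ : G →* H} (hφ : Function.Surjective φ) :
    IsIrredundantCover (A.comap φ) (B.comap φ) (C.comap φ) where
  mem_or_mem_or_mem g := h.mem_or_mem_or_mem (φ g)
  exists_mem_left := by
    obtain ⟨a, ha⟩ := h.exists_mem_left
    obtain ⟨g, rfl⟩ := hφ a
    exact ⟨g, ha⟩
  exists_mem_mid := by
    obtain ⟨b, hb⟩ := h.exists_mem_mid
    obtain ⟨g, rfl⟩ := hφ b
    exact ⟨g, hb⟩
  exists_mem_right := by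
    obtain ⟨c, hc⟩ := h.exists_mem_right
    obtain ⟨g, rfl⟩ := hφ c
    exact ⟨g, hc⟩

theorem kleinFour :
    IsIrredundantCover (MonoidHom.fst _ _).ker (MonoidHom.snd _ _).ker
      (MonoidHom.fst _ _ * MonoidHom.snd _ _ : V₄ →* Multiplicative (ZMod 2)).ker := by
  constructor <;> simp only [MonoidHom.mem_ker, MonoidHom.mul_apply] <;> decide

end IsIrredundantCover

theorem isIrredundantTripleCover_iff {G : Type*} [Group G] {S : Set (Subgroup G)} :
    IsIrredundantTripleCover S ↔ ∃ A B C, S = {A, B, C} ∧ IsIrredundantCover A B C := by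
  simp only [IsIrredundantTripleCover, Set.not_subset, Set.eq_univ_iff_forall, Set.mem_union,
    SetLike.mem_coe, not_or, or_assoc]
  constructor
  · rintro ⟨A, B, C, rfl, -, -, -, hA, hB, hC, hU⟩
    exact ⟨A, B, C, rfl, hU, hA, hB, hC⟩
  · rintro ⟨A, B, C, rfl, h⟩
    obtain ⟨a, -, haB, haC⟩ := h.exists_mem_left
    obtain ⟨b, -, hbA, -⟩ := h.exists_mem_mid
    exact ⟨A, B, C, rfl, fun hA => hbA (hA ▸ mem_top b), fun hB => haB (hB ▸ mem_top a),
      fun hC => haC (hC ▸ mem_top a), h.exists_mem_left, h.exists_mem_mid, h.exists_mem_right,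
      h.mem_or_mem_or_mem⟩

theorem unique_klein_quotient_imp_unique_cover_general
    (G : Type*) [Group G]
    (h : ∃! N : Subgroup G,
      ∃ φ : G →* Multiplicative (ZMod 2) × Multiplicative (ZMod 2), Function.Surjective φ ∧ φ.ker = N) :
    ∃! S : Set (Subgroup G), IsIrredundantTripleCover S := by
  obtain ⟨N, ⟨φ, hφ, -⟩, hN⟩ := h
  have hS : ∀ S, IsIrredundantTripleCover S → S = Set.Ioo N ⊤ := by
    intro S hS
    obtain ⟨A, B, C, rfl, hABC⟩ := isIrredundantTripleCover_iff.1 hS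
    obtain ⟨ψ, hψ, hker⟩ := hABC.exists_surjective_ker_eq
    rw [← hABC.Ioo_inf_eq, ← hker, hN _ ⟨ψ, hψ, rfl⟩]
  have hS₀ := isIrredundantTripleCover_iff.2 ⟨_, _, _, rfl, IsIrredundantCover.kleinFour.comap hφ⟩
  exact ⟨_, hS₀, fun S hS' => (hS S hS').trans (hS _ hS₀).symm⟩

theorem unique_klein_quotient_imp_unique_cover
    (G : Type*) [Group G] [Finite G]
    (h : ∃! N : Subgroup G,
      ∃ φ : G →* Multiplicative (ZMod 2) × Multiplicative (ZMod 2), Function.Surjective φ ∧ φ.ker = N) :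
    ∃! S : Set (Subgroup G), IsIrredundantTripleCover S :=
  unique_klein_quotient_imp_unique_cover_general G h
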